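/- Let ξ = (p_1, …, p_m) and ζ = (q_1, …, q_n) be polygonal curves in ℝ^d with m ≥ 2n − 1 and m ≥ 3. Then d_F(ξ, ζ) ≥ (1/2) · min{ dist(p_i, [p_{i−1}, p_{i+1}]) : 2 ≤ i ≤ m−1 }, where [a,b] denotes the closed line segment from a to b and dist(x, [a,b]) is the distance from the point x to that segment. -/
import Mathlib


/-- The piecewise-linear map of the polygonal curve with vertices `v 0, …, v (m-1)`,
uniformly parameterized over `[0,1]`. -/
noncomputable def polyMap {E : Type*} [NormedAddCommGroup E] [NormedSpace ℝ E]
    (m : ℕ) (v : ℕ → E) (t : ℝ) : E :=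
  let u : ℝ := t * ((m - 1 : ℕ) : ℝ)
  let j : ℕ := min (Int.toNat ⌊u⌋) (m - 1)
  v j + (u - (j : ℝ)) • (v (min (j + 1) (m - 1)) - v j)

/-- The Fréchet distance between two curves `f g : ℝ → E` (regarded as parameterized
over `[0,1]`): the infimum of the bounds `r` achievable by pairs of continuous
nondecreasing surjective reparameterizations of `[0,1]`. -/
noncomputable def frechetDist {E : Type*} [PseudoMetricSpace E] (f g : ℝ → E) : ℝ :=
  sInf {r : ℝ | ∃ φ ψ : ℝ → ℝ,
      ContinuousOn φ (Set.Icc 0 1) ∧ MonotoneOn φ (Set.Icc 0 1) ∧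
      Set.MapsTo φ (Set.Icc 0 1) (Set.Icc 0 1) ∧ Set.SurjOn φ (Set.Icc 0 1) (Set.Icc 0 1) ∧
      ContinuousOn ψ (Set.Icc 0 1) ∧ MonotoneOn ψ (Set.Icc 0 1) ∧
      Set.MapsTo ψ (Set.Icc 0 1) (Set.Icc 0 1) ∧ Set.SurjOn ψ (Set.Icc 0 1) (Set.Icc 0 1) ∧
      ∀ t ∈ Set.Icc (0:ℝ) 1, dist (f (φ t)) (g (ψ t)) ≤ r}

section Aux
variable {E : Type*} [NormedAddCommGroup E] [NormedSpace ℝ E]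

lemma polyMap_eval (m : ℕ) (v : ℕ → E) (t : ℝ) :
    polyMap m v t = v (min (Int.toNat ⌊t * ((m-1:ℕ):ℝ)⌋) (m-1)) +
      (t * ((m-1:ℕ):ℝ) - ((min (Int.toNat ⌊t * ((m-1:ℕ):ℝ)⌋) (m-1) : ℕ) : ℝ)) •
      (v (min (min (Int.toNat ⌊t * ((m-1:ℕ):ℝ)⌋) (m-1) + 1) (m-1)) -
       v (min (Int.toNat ⌊t * ((m-1:ℕ):ℝ)⌋) (m-1))) := rfl

lemma polyMap_vertex (m : ℕ) (hm : 2 ≤ m) (v : ℕ → E) (i : ℕ) (hi : i ≤ m - 1) :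
    polyMap m v ((i : ℝ) / ((m - 1 : ℕ) : ℝ)) = v i := by
  have hN : ((m-1:ℕ):ℝ) ≠ 0 := Nat.cast_ne_zero.mpr (by omega)
  rw [polyMap_eval, div_mul_cancel₀ _ hN]
  rw [Int.floor_natCast, Int.toNat_natCast, min_eq_left hi, sub_self, zero_smul, add_zero]

end Aux

noncomputable def eIdx (n : ℕ) (u : ℝ) : ℕ := min (Int.toNat ⌊u * ((n-1:ℕ):ℝ)⌋) (n-2)

lemma eIdx_le (n : ℕ) (u : ℝ) : eIdx n u ≤ n - 2 := min_le_right _ _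

lemma eIdx_mono (n : ℕ) {u u' : ℝ} (h : u ≤ u') : eIdx n u ≤ eIdx n u' := by
  unfold eIdx
  exact min_le_min (Int.toNat_le_toNat (Int.floor_le_floor
    (mul_le_mul_of_nonneg_right h (Nat.cast_nonneg _)))) le_rfl

section Aux2
variable {E : Type*} [NormedAddCommGroup E] [NormedSpace ℝ E]

lemma polyMap_edge (n : ℕ) (hn : 1 ≤ n) (q : ℕ → E) (u : ℝ) (hu0 : 0 ≤ u) (hu1 : u ≤ 1) :
    polyMap n q u = q (eIdx n u) + (u * ((n-1:ℕ):ℝ) - (eIdx n u : ℝ)) •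
      (q (min (eIdx n u + 1) (n-1)) - q (eIdx n u)) := by
  set U : ℝ := u * ((n-1:ℕ):ℝ) with hU
  have hU0 : 0 ≤ U := by positivity
  have hU1 : U ≤ ((n-1:ℕ):ℝ) := by
    rw [hU]; nlinarith [Nat.cast_nonneg (α := ℝ) (n-1)]
  set F : ℕ := Int.toNat ⌊U⌋ with hF
  have hFz : (F:ℤ) = ⌊U⌋ := Int.toNat_of_nonneg (Int.floor_nonneg.mpr hU0)
  have hFr : (F:ℝ) = ((⌊U⌋:ℤ):ℝ) := by exact_mod_cast congrArg (Int.cast : ℤ → ℝ) hFz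
  have hFU : (F : ℝ) ≤ U := by rw [hFr]; exact Int.floor_le U
  rcases le_or_gt F (n-2) with hc | hc
  · have : eIdx n u = F := min_eq_left hc
    rw [polyMap_eval, this]
    have : min F (n-1) = F := min_eq_left (by omega)
    rw [this]
  · -- F ≥ n-1, forces U = n-1 and n ≥ 2
    have hFn : (F:ℝ) ≤ ((n-1:ℕ):ℝ) := hFU.trans hU1
    have hF1 : F ≤ n - 1 := by exact_mod_cast hFn
    have hFeq : F = n - 1 := by omega
    have hn2 : 2 ≤ n := by omega
    have hUF : U < (F:ℝ) + 1 := by rw [hFr]; exact Int.lt_floor_add_one U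
    have hUeq : U = ((n-1:ℕ):ℝ) := le_antisymm hU1 (by rw [← hFeq]; exact hFU)
    have heI : eIdx n u = n - 2 := by
      unfold eIdx; rw [← hU, ← hF, hFeq]; omega
    rw [polyMap_eval, ← hU, ← hF, hFeq, heI]
    have h1 : min (n-1) (n-1) = n - 1 := min_self _
    have h2 : min (n-1+1) (n-1) = n - 1 := by omega
    have h3 : min (n-2+1) (n-1) = n - 1 := by omega
    rw [h1, h2, h3, hUeq]
    have hcast : ((n-1:ℕ):ℝ) - ((n-2:ℕ):ℝ) = 1 := by
      have : n - 1 = (n-2) + 1 := by omega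
      rw [this]; push_cast; ring
    rw [sub_self, zero_smul, add_zero, hcast, one_smul]
    abel

end Aux2

lemma pigeon (m n : ℕ) (hm : 3 ≤ m) (hmn : 2*n - 1 ≤ m) (k : ℕ → ℕ)
    (hmono : ∀ a b, a ≤ b → b ≤ m-1 → k a ≤ k b) (hbd : ∀ a, a ≤ m-1 → k a ≤ n-2) :
    ∃ i, 1 ≤ i ∧ i ≤ m-2 ∧ k (i-1) = k (i+1) := by
  by_contra h
  push_neg at h
  have key : ∀ j, 2*j ≤ m-1 → j ≤ k (2*j) := by
    intro j
    induction j with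
    | zero => intro _; exact Nat.zero_le _
    | succ j ih =>
      intro hj
      have h1 : k (2*j) ≤ k (2*j+2) := hmono _ _ (by omega) (by omega)
      have h2 : k ((2*j+1)-1) ≠ k ((2*j+1)+1) := h (2*j+1) (by omega) (by omega)
      have e1 : (2*j+1)-1 = 2*j := by omega
      have e2 : (2*j+1)+1 = 2*j+2 := by omega
      rw [e1, e2] at h2
      have h3 : j ≤ k (2*j) := ih (by omega)
      have e3 : 2*(j+1) = 2*j+2 := by omega
      rw [e3]
      omega
  rcases le_or_gt n 1 with hn1 | hn1
  · have h0 : k 0 = 0 := by have := hbd 0 (by omega); omega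
    have h2 : k 2 = 0 := by have := hbd 2 (by omega); omega
    have := h 1 le_rfl (by omega)
    simp only [Nat.sub_self] at this
    exact this (by rw [h0, h2])
  · have h1 := key (n-1) (by omega)
    have h2 := hbd (2*(n-1)) (by omega)
    omega

section Aux3
variable {E : Type*} [NormedAddCommGroup E] [NormedSpace ℝ E]

lemma polyMap_bound (m : ℕ) (hm : 1 ≤ m) (v : ℕ → E) (t : ℝ) (ht0 : 0 ≤ t) (ht1 : t ≤ 1) :
    ‖polyMap m v t‖ ≤ 3 * ∑ k ∈ Finset.range m, ‖v k‖ := by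
  rw [polyMap_eval]
  set U : ℝ := t * ((m-1:ℕ):ℝ) with hU
  have hU0 : 0 ≤ U := by positivity
  have hU1 : U ≤ ((m-1:ℕ):ℝ) := by rw [hU]; nlinarith [Nat.cast_nonneg (α := ℝ) (m-1)]
  set F : ℕ := Int.toNat ⌊U⌋ with hF
  have hFz : (F:ℤ) = ⌊U⌋ := Int.toNat_of_nonneg (Int.floor_nonneg.mpr hU0)
  have hFr : (F:ℝ) = ((⌊U⌋:ℤ):ℝ) := by exact_mod_cast congrArg (Int.cast : ℤ → ℝ) hFz
  have hFm : F ≤ m - 1 := by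
    have : (⌊U⌋:ℤ) ≤ ((m-1:ℕ):ℤ) := by exact_mod_cast Int.floor_le_floor hU1 |>.trans_eq (Int.floor_natCast _)
    omega
  set j : ℕ := min F (m-1) with hj
  have hjF : j = F := min_eq_left hFm
  have hd0 : 0 ≤ U - (j:ℝ) := by rw [hjF, hFr]; linarith [Int.floor_le U, hFr]
  have hd1 : U - (j:ℝ) ≤ 1 := by
    rw [hjF, hFr]; have := Int.lt_floor_add_one U; linarith
  have hS : ∀ i, i ≤ m - 1 → ‖v i‖ ≤ ∑ k ∈ Finset.range m, ‖v k‖ := by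
    intro i hi
    exact Finset.single_le_sum (f := fun k => ‖v k‖) (fun k _ => norm_nonneg _)
      (Finset.mem_range.mpr (by omega))
  have h1 := hS j (by omega)
  have h2 := hS (min (j+1) (m-1)) (min_le_right _ _)
  calc ‖v j + (U - (j:ℝ)) • (v (min (j+1) (m-1)) - v j)‖
      ≤ ‖v j‖ + ‖(U - (j:ℝ)) • (v (min (j+1) (m-1)) - v j)‖ := norm_add_le _ _
    _ ≤ ‖v j‖ + 1 * (‖v (min (j+1) (m-1))‖ + ‖v j‖) := by
        rw [norm_smul]
        gcongr
        · rw [Real.norm_eq_abs, abs_le]; constructor <;> linarith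
        · exact norm_sub_le _ _
    _ ≤ 3 * ∑ k ∈ Finset.range m, ‖v k‖ := by linarith
end Aux3

lemma seg_close {E : Type*} [NormedAddCommGroup E] [NormedSpace ℝ E]
    (P0 P1 P2 x0 x1 x2 Q w : E) (a b c : ℝ) (hab : a ≤ b) (hbc : b ≤ c)
    (hx0 : x0 = Q + a • w) (hx1 : x1 = Q + b • w) (hx2 : x2 = Q + c • w)
    (r : ℝ) (h0 : dist P0 x0 ≤ r) (h1 : dist P1 x1 ≤ r) (h2 : dist P2 x2 ≤ r) :
    Metric.infDist P1 (segment ℝ P0 P2) ≤ 2 * r := by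
  obtain ⟨t, ht0, ht1, hx⟩ : ∃ t : ℝ, 0 ≤ t ∧ t ≤ 1 ∧ x1 = x0 + t • (x2 - x0) := by
    rcases eq_or_lt_of_le (hab.trans hbc) with he | hlt
    · refine ⟨0, le_rfl, zero_le_one, ?_⟩
      have hb : b = a := le_antisymm (hbc.trans_eq he.symm) hab
      rw [hx1, hx0, hb]; simp
    · refine ⟨(b-a)/(c-a), div_nonneg (by linarith) (by linarith),
        by rw [div_le_one (by linarith)]; linarith, ?_⟩
      rw [hx0, hx1, hx2]
      have he2 : (Q + c•w) - (Q + a•w) = (c-a)•w := by rw [sub_smul]; abel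
      rw [he2, smul_smul, div_mul_cancel₀ _ (by linarith : c - a ≠ 0), sub_smul]
      abel
  set y := P0 + t • (P2 - P0) with hy
  have hymem : y ∈ segment ℝ P0 P2 := by
    rw [segment_eq_image']; exact ⟨t, ⟨ht0, ht1⟩, rfl⟩
  have hxy : dist x1 y ≤ r := by
    have he : x1 - y = (1-t) • (x0 - P0) + t • (x2 - P2) := by
      rw [hx, hy]; module
    rw [dist_eq_norm, he]
    have n0 : ‖x0 - P0‖ ≤ r := by rw [← dist_eq_norm, dist_comm]; exact h0
    have n2 : ‖x2 - P2‖ ≤ r := by rw [← dist_eq_norm, dist_comm]; exact h2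
    calc ‖(1-t) • (x0 - P0) + t • (x2 - P2)‖
        ≤ ‖(1-t) • (x0 - P0)‖ + ‖t • (x2 - P2)‖ := norm_add_le _ _
      _ = (1-t) * ‖x0 - P0‖ + t * ‖x2 - P2‖ := by
          rw [norm_smul, norm_smul, Real.norm_eq_abs, Real.norm_eq_abs,
            abs_of_nonneg (by linarith), abs_of_nonneg ht0]
      _ ≤ (1-t) * r + t * r := by
          have := norm_nonneg (x0 - P0)
          nlinarith [norm_nonneg (x2 - P2)]
      _ = r := by ring
  calc Metric.infDist P1 (segment ℝ P0 P2) ≤ dist P1 y := Metric.infDist_le_dist_of_mem hymem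
    _ ≤ dist P1 x1 + dist x1 y := dist_triangle _ _ _
    _ ≤ 2 * r := by linarith

theorem stmt5 (d m n : ℕ) (hm : 3 ≤ m) (hn : 1 ≤ n) (hmn : 2 * n - 1 ≤ m)
    (p q : ℕ → EuclideanSpace ℝ (Fin d)) :
    (1 / 2 : ℝ) * sInf {r : ℝ | ∃ i, 1 ≤ i ∧ i ≤ m - 2 ∧
        r = Metric.infDist (p i) (segment ℝ (p (i - 1)) (p (i + 1)))}
      ≤ frechetDist (polyMap m p) (polyMap n q) := by
  classical
  set S : Set ℝ := {r : ℝ | ∃ i, 1 ≤ i ∧ i ≤ m - 2 ∧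
      r = Metric.infDist (p i) (segment ℝ (p (i - 1)) (p (i + 1)))} with hS
  have hbdd : BddBelow S := by
    refine ⟨0, fun r hr => ?_⟩
    obtain ⟨i, _, _, h⟩ := hr
    rw [h]; exact Metric.infDist_nonneg
  have hm1 : (0:ℝ) < ((m-1:ℕ):ℝ) := by
    have : 0 < m - 1 := by omega
    exact_mod_cast this
  rw [frechetDist]
  apply le_csInf
  · refine ⟨3 * ∑ k ∈ Finset.range m, ‖p k‖ + 3 * ∑ k ∈ Finset.range n, ‖q k‖,
      id, id, continuous_id.continuousOn, (monotone_id.monotoneOn _), Set.mapsTo_id _,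
      Set.surjOn_id _, continuous_id.continuousOn, (monotone_id.monotoneOn _),
      Set.mapsTo_id _, Set.surjOn_id _, ?_⟩
    intro t ht
    have b1 := polyMap_bound m (by omega) p t ht.1 ht.2
    have b2 := polyMap_bound n hn q t ht.1 ht.2
    simp only [id]
    calc dist (polyMap m p t) (polyMap n q t) ≤ ‖polyMap m p t‖ + ‖polyMap n q t‖ := by
          rw [dist_eq_norm]; exact norm_sub_le _ _
      _ ≤ _ := by linarith
  · rintro r ⟨φ, ψ, hφc, hφm, hφmap, hφsur, hψc, hψm, hψmap, hψsur, hb⟩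
    have hsel : ∀ i : ℕ, ∃ t, t ∈ Set.Icc (0:ℝ) 1 ∧
        φ t = ((min i (m-1) : ℕ) : ℝ) / ((m-1:ℕ):ℝ) := by
      intro i
      have hmem : ((min i (m-1) : ℕ) : ℝ) / ((m-1:ℕ):ℝ) ∈ Set.Icc (0:ℝ) 1 := by
        constructor
        · positivity
        · rw [div_le_one hm1]
          exact_mod_cast Nat.cast_le.mpr (min_le_right i (m-1))
      obtain ⟨t, ht, hφt⟩ := hφsur hmem
      exact ⟨t, ht, hφt⟩
    choose T hT hφT using hsel
    have hφT' : ∀ i, i ≤ m-1 → φ (T i) = (i:ℝ)/((m-1:ℕ):ℝ) := by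
      intro i hi; rw [hφT i, min_eq_left hi]
    have hTmono : ∀ a b, a ≤ b → b ≤ m-1 → T a ≤ T b := by
      intro a b hab hbm
      by_contra hlt
      push_neg at hlt
      have h2 := hφm (hT b) (hT a) hlt.le
      rw [hφT' a (by omega), hφT' b hbm] at h2
      have h3 := mul_le_mul_of_nonneg_right h2 hm1.le
      rw [div_mul_cancel₀ _ hm1.ne', div_mul_cancel₀ _ hm1.ne'] at h3
      have hba : b ≤ a := by exact_mod_cast h3
      have hab' : a = b := le_antisymm hab hba
      exact lt_irrefl _ (hab' ▸ hlt)
    set u : ℕ → ℝ := fun i => ψ (T i) with hu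
    have huIcc : ∀ i, u i ∈ Set.Icc (0:ℝ) 1 := fun i => hψmap (hT i)
    have humono : ∀ a b, a ≤ b → b ≤ m-1 → u a ≤ u b :=
      fun a b hab hbm => hψm (hT a) (hT b) (hTmono a b hab hbm)
    have hdist : ∀ i, i ≤ m-1 → dist (p i) (polyMap n q (u i)) ≤ r := by
      intro i hi
      have hbi := hb (T i) (hT i)
      rw [hφT' i hi, polyMap_vertex m (by omega) p i hi] at hbi
      exact hbi
    obtain ⟨i, hi1, hi2, hkk⟩ := pigeon m n hm hmn (fun i => eIdx n (u i))
      (fun a b hab hbm => eIdx_mono n (humono a b hab hbm)) (fun a _ => eIdx_le n _)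

    have hk1 : eIdx n (u (i-1)) ≤ eIdx n (u i) := eIdx_mono n (humono _ _ (by omega) (by omega))
    have hk2 : eIdx n (u i) ≤ eIdx n (u (i+1)) := eIdx_mono n (humono _ _ (by omega) (by omega))
    have hkmid : eIdx n (u i) = eIdx n (u (i-1)) := by omega
    have e0 := polyMap_edge n hn q (u (i-1)) (huIcc _).1 (huIcc _).2
    have e1 := polyMap_edge n hn q (u i) (huIcc _).1 (huIcc _).2
    have e2 := polyMap_edge n hn q (u (i+1)) (huIcc _).1 (huIcc _).2
    rw [hkmid] at e1
    rw [← hkk] at e2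
    have hab2 : u (i-1) * ((n-1:ℕ):ℝ) - (eIdx n (u (i-1)) : ℝ)
        ≤ u i * ((n-1:ℕ):ℝ) - (eIdx n (u (i-1)) : ℝ) :=
      sub_le_sub_right (mul_le_mul_of_nonneg_right
        (humono _ _ (by omega) (by omega)) (Nat.cast_nonneg _)) _
    have hbc2 : u i * ((n-1:ℕ):ℝ) - (eIdx n (u (i-1)) : ℝ)
        ≤ u (i+1) * ((n-1:ℕ):ℝ) - (eIdx n (u (i-1)) : ℝ) :=
      sub_le_sub_right (mul_le_mul_of_nonneg_right
        (humono _ _ (by omega) (by omega)) (Nat.cast_nonneg _)) _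
    have hseg := seg_close (p (i-1)) (p i) (p (i+1))
      (polyMap n q (u (i-1))) (polyMap n q (u i)) (polyMap n q (u (i+1)))
      (q (eIdx n (u (i-1)))) (q (min (eIdx n (u (i-1)) + 1) (n-1)) - q (eIdx n (u (i-1))))
      _ _ _ hab2 hbc2 e0 e1 e2 r
      (hdist (i-1) (by omega)) (hdist i (by omega)) (hdist (i+1) (by omega))
    have hin : Metric.infDist (p i) (segment ℝ (p (i-1)) (p (i+1))) ∈ S := ⟨i, hi1, hi2, rfl⟩
    have hsinf : sInf S ≤ 2 * r := le_trans (csInf_le hbdd hin) hseg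
    linarith
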